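/- A hole move is always allowed and never increases the energy: suppose the configuration is well-ordered and r ∈ S is a hole with hole index i, and let the hole move replace τ_i by the unique time t < τ_i with r_i(t) = r. Then the resulting configuration is again well-ordered, and its energy E' satisfies E' ≤ E; moreover, if the old sticking point s_i was multiply occupied (m(s_i) ≥ 2), then E' ≤ E − 2. -/

import Mathlib

namespace IDLA

variable {n : ℕ} {α : Type*} [DecidableEq α] {ℓ : Fin n → ℕ}

/-- The cluster: the union of the live segments `r i t`, `t ≤ τ i`, of the `n` paths. -/
def cluster (r : ∀ i, Fin (ℓ i) → α) (τ : ∀ i, Fin (ℓ i)) : Finset α :=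
  Finset.univ.biUnion fun i => (Finset.univ.filter fun t => t ≤ τ i).image (r i)

/-- `mult r τ z` is the number of labels at `z`, i.e. the number of paths whose
sticking point `s i = r i (τ i)` equals `z`. -/
def mult (r : ∀ i, Fin (ℓ i) → α) (τ : ∀ i, Fin (ℓ i)) (z : α) : ℕ :=
  (Finset.univ.filter fun i => r i (τ i) = z).card

/-- The energy `E = ∑_{z ∈ S} |m(z) − 1|` of a configuration. -/
def energy (r : ∀ i, Fin (ℓ i) → α) (τ : ∀ i, Fin (ℓ i)) : ℕ :=
  ∑ z ∈ cluster r τ, ((mult r τ z : ℤ) - 1).natAbs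

/-- A configuration is well-ordered if for all `i, j` and all `t < τ i`,
`r i t = s j` implies `j < i`. -/
def WellOrdered (r : ∀ i, Fin (ℓ i) → α) (τ : ∀ i, Fin (ℓ i)) : Prop :=
  ∀ (i j : Fin n) (t : Fin (ℓ i)), t < τ i → r i t = r j (τ j) → j < i

end IDLA

/-
Lowering `τ i` to `t` can only shrink the cluster, and it moves one label: the hole `z = r i t`
gains it and `s = r i (τ i)` loses it. Well-ordering survives because no live segment of an index
below `i` passes through `z`. For the energy, compare both sums on `S' ∪ {s} ⊆ S`: the site `z`
contributes `1` before and `0` after, the site `s` contributes `|m(s) - 1|` before and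
`|m(s) - 2|` after, and every other site is unchanged, so `E' + 1 + |m(s) - 1| ≤ E + |m(s) - 2|`.
-/

open Function

theorem Finset.sum_add_sum_eq_of_eqOn_sdiff {β M : Type*} [AddCommMonoid M] [DecidableEq β]
    {T D : Finset β} {f g : β → M} (hD : D ⊆ T) (h : ∀ x ∈ T \ D, f x = g x) :
    ∑ x ∈ T, f x + ∑ x ∈ D, g x = ∑ x ∈ T, g x + ∑ x ∈ D, f x := by
  rw [← Finset.sum_sdiff hD (f := f), ← Finset.sum_sdiff hD (f := g), Finset.sum_congr rfl h]
  abel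

namespace IDLA

variable {n : ℕ} {α : Type*} {ℓ : Fin n → ℕ}

theorem WellOrdered.update_of_hole {r : ∀ i, Fin (ℓ i) → α} {τ : ∀ i, Fin (ℓ i)}
    (hwo : WellOrdered r τ) {i : Fin n} {t : Fin (ℓ i)} (hri : Injective (r i)) (ht : t < τ i)
    (hmin : ∀ j, (∃ u : Fin (ℓ j), u ≤ τ j ∧ r j u = r i t) → i ≤ j) :
    WellOrdered r (update τ i t) := by
  intro a b u hu hub
  rcases eq_or_ne a i with rfl | ha
  · rw [update_self] at hu
    rcases eq_or_ne b a with rfl | hb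
    · rw [update_self] at hub
      exact absurd (hri hub) hu.ne
    · rw [update_of_ne hb] at hub
      exact hwo a b u (hu.trans ht) hub
  · rw [update_of_ne ha] at hu
    rcases eq_or_ne b i with rfl | hb
    · rw [update_self] at hub
      exact (hmin a ⟨u, hu.le, hub⟩).lt_of_ne ha.symm
    · rw [update_of_ne hb] at hub
      exact hwo a b u hu hub

variable [DecidableEq α]

def siteEnergy (r : ∀ i, Fin (ℓ i) → α) (τ : ∀ i, Fin (ℓ i)) (w : α) : ℕ :=
  ((mult r τ w : ℤ) - 1).natAbs

theorem energy_eq_sum_siteEnergy (r : ∀ i, Fin (ℓ i) → α) (τ : ∀ i, Fin (ℓ i)) :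
    energy r τ = ∑ w ∈ cluster r τ, siteEnergy r τ w :=
  rfl

theorem mem_cluster {r : ∀ i, Fin (ℓ i) → α} {τ : ∀ i, Fin (ℓ i)} {w : α} :
    w ∈ cluster r τ ↔ ∃ j u, u ≤ τ j ∧ r j u = w := by
  simp [cluster]

theorem cluster_mono {r : ∀ i, Fin (ℓ i) → α} {σ τ : ∀ i, Fin (ℓ i)} (h : σ ≤ τ) :
    cluster r σ ⊆ cluster r τ := fun _ hw => by
  obtain ⟨j, u, hu, rfl⟩ := mem_cluster.1 hw
  exact mem_cluster.2 ⟨j, u, hu.trans (h j), rfl⟩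

theorem mult_eq_zero_iff {r : ∀ i, Fin (ℓ i) → α} {τ : ∀ i, Fin (ℓ i)} {w : α} :
    mult r τ w = 0 ↔ ∀ j, r j (τ j) ≠ w := by
  simp [mult, Finset.filter_eq_empty_iff]

theorem mult_update_add (r : ∀ i, Fin (ℓ i) → α) (τ : ∀ i, Fin (ℓ i)) (i : Fin n)
    (t : Fin (ℓ i)) (w : α) :
    mult r (update τ i t) w + (if r i (τ i) = w then 1 else 0) =
      mult r τ w + (if r i t = w then 1 else 0) := by
  have hrest : ∑ j ∈ {i}ᶜ, (if r j (update τ i t j) = w then 1 else 0) =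
      ∑ j ∈ {i}ᶜ, (if r j (τ j) = w then 1 else 0) :=
    Finset.sum_congr rfl fun j hj => by
      rw [update_of_ne (Finset.mem_compl.1 hj ∘ Finset.mem_singleton.2)]
  simp only [mult, Finset.card_filter]
  rw [Fintype.sum_eq_add_sum_compl i, Fintype.sum_eq_add_sum_compl i
    (f := fun j => if r j (τ j) = w then 1 else 0), hrest, update_self]
  ring

theorem siteEnergy_update_of_ne {r : ∀ i, Fin (ℓ i) → α} {τ : ∀ i, Fin (ℓ i)} {i : Fin n}
    {t : Fin (ℓ i)} {w : α} (hs : w ≠ r i (τ i)) (hz : w ≠ r i t) :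
    siteEnergy r (update τ i t) w = siteEnergy r τ w := by
  have := mult_update_add r τ i t w
  simp only [Ne.symm hs, Ne.symm hz, if_false, add_zero] at this
  rw [siteEnergy, siteEnergy, this]

theorem energy_update_add_le (r : ∀ i, Fin (ℓ i) → α) (τ : ∀ i, Fin (ℓ i)) {i : Fin n}
    {t : Fin (ℓ i)} (ht : t ≤ τ i) (hne : r i t ≠ r i (τ i)) :
    energy r (update τ i t) + (siteEnergy r τ (r i t) + siteEnergy r τ (r i (τ i))) ≤
      energy r τ + (siteEnergy r (update τ i t) (r i t) +
        siteEnergy r (update τ i t) (r i (τ i))) := by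
  set T := insert (r i (τ i)) (cluster r (update τ i t))
  have hzT : r i t ∈ T := Finset.mem_insert_of_mem (mem_cluster.2 ⟨i, t, by simp, rfl⟩)
  have hTS : T ⊆ cluster r τ := Finset.insert_subset (mem_cluster.2 ⟨i, τ i, le_rfl, rfl⟩)
    (cluster_mono (update_le_self_iff.2 ht))
  have hswap := Finset.sum_add_sum_eq_of_eqOn_sdiff (f := siteEnergy r (update τ i t))
    (g := siteEnergy r τ) (D := {r i t, r i (τ i)}) (T := T)
    (Finset.insert_subset hzT (Finset.singleton_subset_iff.2 (Finset.mem_insert_self _ _)))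
    fun w hw => by
      simp only [Finset.mem_sdiff, Finset.mem_insert, Finset.mem_singleton, not_or] at hw
      exact siteEnergy_update_of_ne hw.2.2 hw.2.1
  rw [Finset.sum_pair hne, Finset.sum_pair hne] at hswap
  have hE' : energy r (update τ i t) ≤ ∑ w ∈ T, siteEnergy r (update τ i t) w := by
    rw [energy_eq_sum_siteEnergy]
    exact Finset.sum_le_sum_of_subset (Finset.subset_insert _ _)
  have hE : ∑ w ∈ T, siteEnergy r τ w ≤ energy r τ := by
    rw [energy_eq_sum_siteEnergy]
    exact Finset.sum_le_sum_of_subset hTS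
  omega

end IDLA

theorem hole_move_well_ordered_and_energy_general
    {n : ℕ} {α : Type*} [DecidableEq α] {ℓ : Fin n → ℕ}
    (r : ∀ i, Fin (ℓ i) → α) (hr : ∀ i, Function.Injective (r i))
    (τ : ∀ i, Fin (ℓ i)) (hwo : IDLA.WellOrdered r τ)
    (z : α) (hhole : IDLA.mult r τ z = 0)
    (i : Fin n)
    (hmin : ∀ j, (∃ t : Fin (ℓ j), t ≤ τ j ∧ r j t = z) → i ≤ j)
    (t : Fin (ℓ i)) (ht : t < τ i) (hrt : r i t = z) :
    IDLA.WellOrdered r (Function.update τ i t) ∧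
    IDLA.energy r (Function.update τ i t) ≤ IDLA.energy r τ ∧
    (2 ≤ IDLA.mult r τ (r i (τ i)) →
      IDLA.energy r (Function.update τ i t) + 2 ≤ IDLA.energy r τ) := by
  subst hrt
  have hs := IDLA.mult_eq_zero_iff.1 hhole i
  have hmz := IDLA.mult_update_add r τ i t (r i t)
  have hms := IDLA.mult_update_add r τ i t (r i (τ i))
  have key := IDLA.energy_update_add_le r τ ht.le (Ne.symm hs)
  simp only [hs, Ne.symm hs, if_true, if_false, hhole] at hmz hms
  simp only [IDLA.siteEnergy] at key
  refine ⟨hwo.update_of_hole (hr i) ht hmin, ?_, fun h2 => ?_⟩ <;> omega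

/-- A hole move is always allowed and never increases the energy:
suppose the configuration is well-ordered, `z ∈ S` is a hole (`m(z) = 0`) with hole
index `i` (i.e. `i` is the least label whose live segment contains `z`), and let the
hole move replace `τ i` by the (unique) time `t < τ i` with `r i t = z`.  Then the
resulting configuration is again well-ordered and its energy `E'` satisfies `E' ≤ E`;
moreover, if the old sticking point `s i` was multiply occupied, then `E' ≤ E − 2`. -/
theorem hole_move_well_ordered_and_energy
    {n : ℕ} {α : Type*} [DecidableEq α] {ℓ : Fin n → ℕ}
    (r : ∀ i, Fin (ℓ i) → α) (hr : ∀ i, Function.Injective (r i))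
    (τ : ∀ i, Fin (ℓ i)) (hwo : IDLA.WellOrdered r τ)
    (z : α) (hz : z ∈ IDLA.cluster r τ) (hhole : IDLA.mult r τ z = 0)
    (i : Fin n)
    (hlive : ∃ t : Fin (ℓ i), t ≤ τ i ∧ r i t = z)
    (hmin : ∀ j, (∃ t : Fin (ℓ j), t ≤ τ j ∧ r j t = z) → i ≤ j)
    (t : Fin (ℓ i)) (ht : t < τ i) (hrt : r i t = z) :
    IDLA.WellOrdered r (Function.update τ i t) ∧
    IDLA.energy r (Function.update τ i t) ≤ IDLA.energy r τ ∧
    (2 ≤ IDLA.mult r τ (r i (τ i)) →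
      IDLA.energy r (Function.update τ i t) + 2 ≤ IDLA.energy r τ) :=
  hole_move_well_ordered_and_energy_general r hr τ hwo z hhole i hmin t ht hrt
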